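/- Let A be a complete filtered associative algebra and P: A → A a linear filtration-preserving map, P̃ = id − P. There exists a unique map χ: A_1 → A_1 such that (χ − id)(A_i) ⊆ A_{2i} for all i ≥ 1 and such that for all a ∈ A_1, a = C(P(χ(a)), P̃(χ(a))), where C(x,y) = log(exp(x)exp(y)). -/

import Mathlib

open scoped BigOperators

noncomputable def expS (K : Type*) {A : Type*} [Field K] [CharZero K] [Ring A] [Algebra K A]
    [UniformSpace A] (a : A) : A :=
  ∑' n : ℕ, ((n.factorial : K)⁻¹) • a ^ n

noncomputable def logS (K : Type*) {A : Type*} [Field K] [CharZero K] [Ring A] [Algebra K A]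
    [UniformSpace A] (a : A) : A :=
  ∑' n : ℕ, (((-1 : K) ^ n) * ((n : K) + 1)⁻¹) • (a - 1) ^ (n + 1)

noncomputable def BCHs (K : Type*) {A : Type*} [Field K] [CharZero K] [Ring A] [Algebra K A]
    [UniformSpace A] (x y : A) : A :=
  logS K (expS K x * expS K y) - x - y

/-- A complete decreasing multiplicative filtration defining the topology of `A`. -/
def IsCompleteFiltration (K : Type*) {A : Type*} [Field K] [CharZero K] [Ring A] [Algebra K A]
    [UniformSpace A] (F : ℕ → Submodule K A) : Prop :=
  F 0 = ⊤ ∧ (∀ n, F (n + 1) ≤ F n) ∧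
    (∀ m n : ℕ, ∀ x ∈ F m, ∀ y ∈ F n, x * y ∈ F (m + n)) ∧
    (∀ n, IsOpen ((F n : Set A))) ∧
    (∀ U ∈ nhds (0 : A), ∃ n, ((F n : Set A)) ⊆ U)

/-!
Write `log (exp (P b) * exp (b - P b)) = b + f b` with `f b = BCH (P b, b - P b)`. The map `f`
vanishes to second order for the filtration: it sends `A_i` into `A_{2i}` and, on `A_i`, sends
differences lying in `A_n` to `A_{n+i}`. This holds for the tails of the exponential and logarithm
series and survives sums, products and composition with filtration-preserving maps. Hence
`b ↦ a - f b` is a contraction of `A_1`, and `χ a` is its unique fixed point, the limit of the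
iterates from `0`. For `a ∈ A_i`, bootstrapping `χ a = a - f (χ a)` gives `χ a ∈ A_i`, and then
`χ a - a = -f (χ a) ∈ A_{2i}`.
-/

open Function

section FilteredAlgebra

variable {𝕜 : Type*} [Field 𝕜] [CharZero 𝕜] {R : Type*} [Ring R] [Algebra 𝕜 R] [UniformSpace R]
  {F : ℕ → Submodule 𝕜 R}

namespace IsCompleteFiltration

theorem mem_of_le (hF : IsCompleteFiltration 𝕜 F) {m n : ℕ} (h : m ≤ n) {x : R} (hx : x ∈ F n) :
    x ∈ F m :=
  antitone_nat_of_succ_le hF.2.1 h hx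

theorem mul_mem (hF : IsCompleteFiltration 𝕜 F) {m n : ℕ} {x y : R} (hx : x ∈ F m)
    (hy : y ∈ F n) : x * y ∈ F (m + n) :=
  hF.2.2.1 m n x hx y hy

theorem pow_mem (hF : IsCompleteFiltration 𝕜 F) {i : ℕ} {x : R} (hx : x ∈ F i) :
    ∀ k, x ^ k ∈ F (k * i)
  | 0 => by simp [hF.1]
  | k + 1 => by
    rw [pow_succ', add_one_mul, add_comm]
    exact hF.mul_mem hx (hF.pow_mem hx k)

theorem pow_sub_pow_mem (hF : IsCompleteFiltration 𝕜 F) {i n : ℕ} {x x' : R} (hx : x ∈ F i)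
    (hx' : x' ∈ F i) (hd : x' - x ∈ F n) : ∀ k, x' ^ (k + 1) - x ^ (k + 1) ∈ F (n + k * i)
  | 0 => by simpa using hd
  | k + 1 => by
    have hsplit : x' ^ (k + 2) - x ^ (k + 2)
        = x' * (x' ^ (k + 1) - x ^ (k + 1)) + (x' - x) * x ^ (k + 1) := by
      rw [pow_succ' x' (k + 1), pow_succ' x (k + 1)]
      noncomm_ring
    rw [hsplit]
    refine add_mem ?_ (hF.mul_mem hd (hF.pow_mem hx (k + 1)))
    have := hF.mul_mem hx' (hF.pow_sub_pow_mem hx hx' hd k)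
    rwa [show i + (n + k * i) = n + (k + 1) * i by ring] at this

theorem smul_pow_mem (hF : IsCompleteFiltration 𝕜 F) {i m k : ℕ} {x : R}
    (hx : x ∈ F i) (c : 𝕜) (h : m ≤ k * i) : c • x ^ k ∈ F m :=
  Submodule.smul_mem _ _ (hF.mem_of_le h (hF.pow_mem hx k))

theorem eq_zero_of_forall_mem [T1Space R] (hF : IsCompleteFiltration 𝕜 F) {x : R}
    (h : ∀ n, x ∈ F n) : x = 0 :=
  Specializes.eq <| specializes_iff_pure.2 <| Filter.pure_le_iff.2 fun U hU => by
    obtain ⟨n, hn⟩ := hF.2.2.2.2 U hU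
    exact hn (h n)

theorem tsum_mem [ContinuousAdd R] (hF : IsCompleteFiltration 𝕜 F) {f : ℕ → R} {n : ℕ}
    (h : ∀ k, f k ∈ F n) : ∑' k, f k ∈ F n :=
  _root_.tsum_mem (AddSubgroup.isClosed_of_isOpen (F n).toAddSubgroup (hF.2.2.2.1 n)) h

theorem summable_of_mem [CompleteSpace R] [IsUniformAddGroup R] (hF : IsCompleteFiltration 𝕜 F)
    {f : ℕ → R} (h : ∀ k, f k ∈ F k) : Summable f := by
  refine summable_iff_vanishing.2 fun U hU => ?_
  obtain ⟨n, hn⟩ := hF.2.2.2.2 U hU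
  refine ⟨Finset.range n, fun t ht => hn (sum_mem fun k hk => hF.mem_of_le ?_ (h k))⟩
  simpa using Finset.disjoint_left.1 ht hk

theorem tsum_nat_add_mem [T2Space R] [IsTopologicalAddGroup R] (hF : IsCompleteFiltration 𝕜 F)
    {f : ℕ → R} (h : ∀ k, f k ∈ F k) (m : ℕ) : ∑' k, f (k + m) ∈ F m :=
  hF.tsum_mem fun k => hF.mem_of_le (Nat.le_add_left m k) (h (k + m))

theorem exists_isFixedPt [CompleteSpace R] [T2Space R] [IsUniformAddGroup R]
    (hF : IsCompleteFiltration 𝕜 F) {Φ : R → R} {j : ℕ} (hmaps : ∀ x ∈ F j, Φ x ∈ F j)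
    (hcontr : ∀ n x x', x ∈ F j → x' ∈ F j → x' - x ∈ F n → Φ x' - Φ x ∈ F (n + 1)) :
    ∃ y ∈ F j, IsFixedPt Φ y := by
  set x : ℕ → R := fun k => Φ^[k] 0
  have hx_succ (k : ℕ) : x (k + 1) = Φ (x k) := iterate_succ_apply' Φ k 0
  have hx : ∀ k, x k ∈ F j := by
    intro k
    induction k with
    | zero => exact zero_mem _
    | succ k ih => rw [hx_succ]; exact hmaps _ ih
  have hd : ∀ k, x (k + 1) - x k ∈ F k := by
    intro k
    induction k with
    | zero => simp [hF.1]
    | succ k ih =>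
      have := hcontr k _ _ (hx k) (hx (k + 1)) ih
      rwa [← hx_succ, ← hx_succ] at this
  set y := ∑' k, (x (k + 1) - x k) with hy_def
  have htail (m : ℕ) : y - x m ∈ F m := by
    rw [hy_def, ← (hF.summable_of_mem hd).sum_add_tsum_nat_add m, Finset.sum_range_sub]
    simpa [x] using hF.tsum_nat_add_mem hd m
  have hy : y ∈ F j := hF.tsum_mem fun k => sub_mem (hx (k + 1)) (hx k)
  refine ⟨y, hy, sub_eq_zero.1 (hF.eq_zero_of_forall_mem fun n => ?_)⟩
  have hsplit : Φ y - y = (Φ y - Φ (x n)) - (y - x (n + 1)) := by rw [hx_succ]; abel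
  rw [hsplit]
  exact hF.mem_of_le n.le_succ
    (sub_mem (hcontr n _ _ (hx n) hy (htail n)) (htail (n + 1)))

end IsCompleteFiltration

end FilteredAlgebra

section Order

variable {𝕜 : Type*} [Field 𝕜] {R : Type*} [Ring R] [Algebra 𝕜 R] {F : ℕ → Submodule 𝕜 R}

structure IsFirstOrder (F : ℕ → Submodule 𝕜 R) (f : R → R) : Prop where
  map_mem : ∀ ⦃i x⦄, 1 ≤ i → x ∈ F i → f x ∈ F i
  map_sub_mem : ∀ ⦃i n x x'⦄, 1 ≤ i → x ∈ F i → x' ∈ F i → x' - x ∈ F n → f x' - f x ∈ F n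

/-- The filtered analogue of a map vanishing to second order at `0`. -/
structure IsHigherOrder (F : ℕ → Submodule 𝕜 R) (f : R → R) : Prop where
  map_mem : ∀ ⦃i x⦄, 1 ≤ i → x ∈ F i → f x ∈ F (2 * i)
  map_sub_mem : ∀ ⦃i n x x'⦄, 1 ≤ i → x ∈ F i → x' ∈ F i → x' - x ∈ F n → f x' - f x ∈ F (n + i)

theorem isFirstOrder_id : IsFirstOrder F id :=
  ⟨fun _ _ _ hx => hx, fun _ _ _ _ _ _ _ hd => hd⟩

theorem LinearMap.isFirstOrder {P : R →ₗ[𝕜] R} (hP : ∀ n, ∀ x ∈ F n, P x ∈ F n) :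
    IsFirstOrder F P :=
  ⟨fun i x _ hx => hP i x hx, fun n _ x x' _ _ _ hd => by rw [← map_sub]; exact hP _ _ hd⟩

namespace IsFirstOrder

variable {f g : R → R}

theorem add (hf : IsFirstOrder F f) (hg : IsFirstOrder F g) : IsFirstOrder F fun x => f x + g x :=
  ⟨fun _ _ hi hx => add_mem (hf.map_mem hi hx) (hg.map_mem hi hx), fun _ _ _ _ hi hx hx' hd => by
    rw [add_sub_add_comm]
    exact add_mem (hf.map_sub_mem hi hx hx' hd) (hg.map_sub_mem hi hx hx' hd)⟩

theorem sub (hf : IsFirstOrder F f) (hg : IsFirstOrder F g) : IsFirstOrder F fun x => f x - g x :=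
  ⟨fun _ _ hi hx => sub_mem (hf.map_mem hi hx) (hg.map_mem hi hx), fun _ _ _ _ hi hx hx' hd => by
    rw [sub_sub_sub_comm]
    exact sub_mem (hf.map_sub_mem hi hx hx' hd) (hg.map_sub_mem hi hx hx' hd)⟩

theorem mul [CharZero 𝕜] [UniformSpace R] (hF : IsCompleteFiltration 𝕜 F)
    (hf : IsFirstOrder F f) (hg : IsFirstOrder F g) : IsHigherOrder F fun x => f x * g x where
  map_mem _ _ hi hx := by rw [two_mul]; exact hF.mul_mem (hf.map_mem hi hx) (hg.map_mem hi hx)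
  map_sub_mem i n x x' hi hx hx' hd := by
    have hsplit : f x' * g x' - f x * g x = (f x' - f x) * g x' + f x * (g x' - g x) := by
      noncomm_ring
    rw [hsplit, add_comm n i]
    exact add_mem (add_comm i n ▸ hF.mul_mem (hf.map_sub_mem hi hx hx' hd) (hg.map_mem hi hx'))
      (hF.mul_mem (hf.map_mem hi hx) (hg.map_sub_mem hi hx hx' hd))

end IsFirstOrder

namespace IsHigherOrder

variable {f g : R → R}

theorem isFirstOrder [CharZero 𝕜] [UniformSpace R] (hF : IsCompleteFiltration 𝕜 F)
    (hf : IsHigherOrder F f) : IsFirstOrder F f :=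
  ⟨fun _ _ hi hx => hF.mem_of_le (by omega) (hf.map_mem hi hx),
    fun _ _ _ _ hi hx hx' hd => hF.mem_of_le (by omega) (hf.map_sub_mem hi hx hx' hd)⟩

theorem add (hf : IsHigherOrder F f) (hg : IsHigherOrder F g) :
    IsHigherOrder F fun x => f x + g x :=
  ⟨fun _ _ hi hx => add_mem (hf.map_mem hi hx) (hg.map_mem hi hx), fun _ _ _ _ hi hx hx' hd => by
    rw [add_sub_add_comm]
    exact add_mem (hf.map_sub_mem hi hx hx' hd) (hg.map_sub_mem hi hx hx' hd)⟩

theorem comp (hf : IsHigherOrder F f) (hg : IsFirstOrder F g) : IsHigherOrder F fun x => f (g x) :=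
  ⟨fun _ _ hi hx => hf.map_mem hi (hg.map_mem hi hx), fun _ _ _ _ hi hx hx' hd =>
    hf.map_sub_mem hi (hg.map_mem hi hx) (hg.map_mem hi hx') (hg.map_sub_mem hi hx hx' hd)⟩

theorem congr [CharZero 𝕜] [UniformSpace R] (hF : IsCompleteFiltration 𝕜 F) (hf : IsHigherOrder F f)
    (hfg : ∀ x ∈ F 1, f x = g x) : IsHigherOrder F g :=
  ⟨fun _ _ hi hx => hfg _ (hF.mem_of_le hi hx) ▸ hf.map_mem hi hx, fun _ _ _ _ hi hx hx' hd => by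
    rw [← hfg _ (hF.mem_of_le hi hx), ← hfg _ (hF.mem_of_le hi hx')]
    exact hf.map_sub_mem hi hx hx' hd⟩

theorem eq_of_add_eq [CharZero 𝕜] [UniformSpace R] [T1Space R] (hF : IsCompleteFiltration 𝕜 F)
    (hf : IsHigherOrder F f) {b b' : R} (hb : b ∈ F 1) (hb' : b' ∈ F 1) (h : b + f b = b' + f b') : b = b' := by
  refine (sub_eq_zero.1 (hF.eq_zero_of_forall_mem fun n => ?_)).symm
  induction n with
  | zero => simp [hF.1]
  | succ n ih =>
    have hdiff : b' - b = -(f b' - f b) := by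
      rw [neg_sub, sub_eq_sub_iff_add_eq_add, ← h, add_comm]
    rw [hdiff]
    exact neg_mem (hf.map_sub_mem le_rfl hb hb' ih)

theorem mem_of_add_mem [CharZero 𝕜] [UniformSpace R] (hF : IsCompleteFiltration 𝕜 F)
    (hf : IsHigherOrder F f) {i : ℕ} (hi : 1 ≤ i) {b : R} (hb : b ∈ F 1) (h : b + f b ∈ F i) : b ∈ F i := by
  suffices hk : ∀ k, b ∈ F (min i (k + 1)) by
    simpa [min_eq_left (Nat.le_succ i)] using hk i
  intro k
  induction k with
  | zero => exact hF.mem_of_le (min_le_right _ _) hb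
  | succ k ih =>
    rw [← add_sub_cancel_right b (f b)]
    exact sub_mem (hF.mem_of_le (min_le_left _ _) h)
      (hF.mem_of_le (n := 2 * min i (k + 1)) (by omega) (hf.map_mem (by omega) ih))

end IsHigherOrder

end Order

section Series

variable {𝕜 : Type*} [Field 𝕜] [CharZero 𝕜] {R : Type*} [Ring R] [Algebra 𝕜 R] [UniformSpace R]
  [CompleteSpace R] [T2Space R] [IsUniformAddGroup R] {F : ℕ → Submodule 𝕜 R}

noncomputable def tailSeries (c : ℕ → 𝕜) (x : R) : R :=
  ∑' k, c k • x ^ (k + 2)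

theorem isHigherOrder_tailSeries (hF : IsCompleteFiltration 𝕜 F) (c : ℕ → 𝕜) :
    IsHigherOrder F (tailSeries c : R → R) where
  map_mem i x hi hx := hF.tsum_mem fun k => hF.smul_pow_mem hx _ (by nlinarith)
  map_sub_mem i n x x' hi hx hx' hd := by
    have hs {y : R} (hy : y ∈ F i) : Summable fun k => c k • y ^ (k + 2) :=
      hF.summable_of_mem fun k => hF.smul_pow_mem hy _ (by nlinarith)
    rw [tailSeries, tailSeries, ← (hs hx').tsum_sub (hs hx)]
    refine hF.tsum_mem fun k => ?_
    rw [← smul_sub]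
    exact Submodule.smul_mem _ _
      (hF.mem_of_le (by nlinarith) (hF.pow_sub_pow_mem hx hx' hd (k + 1)))

theorem expS_eq_one_add_add_tailSeries (hF : IsCompleteFiltration 𝕜 F) {x : R} (hx : x ∈ F 1) :
    expS 𝕜 x = 1 + x + tailSeries (fun k => ((k + 2).factorial : 𝕜)⁻¹) x := by
  have hs : Summable fun n => ((n.factorial : 𝕜)⁻¹) • x ^ n :=
    hF.summable_of_mem fun n => hF.smul_pow_mem hx _ (by simp)
  rw [expS, ← hs.sum_add_tsum_nat_add 2, tailSeries]
  simp [Finset.sum_range_succ]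

theorem logS_one_add_eq_add_tailSeries (hF : IsCompleteFiltration 𝕜 F) {u : R} (hu : u ∈ F 1) :
    logS 𝕜 (1 + u) = u + tailSeries (fun k : ℕ => (-1 : 𝕜) ^ (k + 1) * ((k : 𝕜) + 2)⁻¹) u := by
  have hs : Summable fun n : ℕ => ((-1 : 𝕜) ^ n * ((n : 𝕜) + 1)⁻¹) • u ^ (n + 1) :=
    hF.summable_of_mem fun n => hF.smul_pow_mem (k := n + 1) hu _ (by simp)
  rw [logS, add_sub_cancel_left, ← hs.sum_add_tsum_nat_add 1, tailSeries]
  norm_num [add_assoc]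

theorem isHigherOrder_bchs (hF : IsCompleteFiltration 𝕜 F) {p q : R → R}
    (hp : IsFirstOrder F p) (hq : IsFirstOrder F q) :
    IsHigherOrder F fun x => BCHs 𝕜 (p x) (q x) := by
  set E : R → R := tailSeries fun k => ((k + 2).factorial : 𝕜)⁻¹
  set L : R → R := tailSeries fun k : ℕ => (-1 : 𝕜) ^ (k + 1) * ((k : 𝕜) + 2)⁻¹
  have hE : IsHigherOrder F E := isHigherOrder_tailSeries hF _
  have hL : IsHigherOrder F L := isHigherOrder_tailSeries hF _
  set h : R → R := fun x => E (p x) + E (q x) + (p x + E (p x)) * (q x + E (q x))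
  have hh : IsHigherOrder F h := ((hE.comp hp).add (hE.comp hq)).add
    ((hp.add ((hE.comp hp).isFirstOrder hF)).mul hF (hq.add ((hE.comp hq).isFirstOrder hF)))
  have hw : IsFirstOrder F fun x => p x + q x + h x := (hp.add hq).add (hh.isFirstOrder hF)
  refine (hh.add (hL.comp hw)).congr hF fun x hx => ?_
  have hexpand (u v e e' : R) :
      (1 + u + e) * (1 + v + e') = 1 + (u + v + (e + e' + (u + e) * (v + e'))) := by
    noncomm_ring
  have hprod : expS 𝕜 (p x) * expS 𝕜 (q x) = 1 + (p x + q x + h x) := by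
    rw [expS_eq_one_add_add_tailSeries hF (hp.map_mem le_rfl hx),
      expS_eq_one_add_add_tailSeries hF (hq.map_mem le_rfl hx), hexpand]
  rw [BCHs, hprod, logS_one_add_eq_add_tailSeries hF (hw.map_mem le_rfl hx)]
  abel

namespace IsHigherOrder

variable {f : R → R}

theorem exists_add_eq (hF : IsCompleteFiltration 𝕜 F) (hf : IsHigherOrder F f) {a : R}
    (ha : a ∈ F 1) : ∃ b ∈ F 1, b + f b = a := by
  obtain ⟨b, hb, hfix⟩ := hF.exists_isFixedPt (Φ := fun b => a - f b)
    (fun b hb => sub_mem ha (hF.mem_of_le (n := 2 * 1) (by omega) (hf.map_mem le_rfl hb)))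
    (fun n b b' hb hb' hd => by
      rw [sub_sub_sub_cancel_left, ← neg_sub]
      exact neg_mem (hf.map_sub_mem le_rfl hb hb' hd))
  exact ⟨b, hb, eq_sub_iff_add_eq.1 hfix.symm⟩

end IsHigherOrder

end Series

variable {K : Type*} [Field K] [CharZero K] {A : Type*} [Ring A] [Algebra K A]
  [UniformSpace A] [CompleteSpace A] [T2Space A] [IsTopologicalRing A]
  [IsUniformAddGroup A]

theorem stmt1 (F : ℕ → Submodule K A) (hF : IsCompleteFiltration K F)
    (P : A →ₗ[K] A) (hP : ∀ n, ∀ x ∈ F n, P x ∈ F n) :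
    ∃ χ : A → A,
      ((∀ a ∈ F 1, χ a ∈ F 1) ∧
        (∀ i : ℕ, 1 ≤ i → ∀ a ∈ F i, χ a - a ∈ F (2 * i)) ∧
        (∀ a ∈ F 1, a = logS K (expS K (P (χ a)) * expS K (χ a - P (χ a))))) ∧
      ∀ χ' : A → A,
        ((∀ a ∈ F 1, χ' a ∈ F 1) ∧
          (∀ i : ℕ, 1 ≤ i → ∀ a ∈ F i, χ' a - a ∈ F (2 * i)) ∧
          (∀ a ∈ F 1, a = logS K (expS K (P (χ' a)) * expS K (χ' a - P (χ' a))))) →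
        ∀ a ∈ F 1, χ' a = χ a := by
  set f : A → A := fun b => BCHs K (P b) (b - P b)
  have hPf : IsFirstOrder F P := LinearMap.isFirstOrder hP
  have hf : IsHigherOrder F f := isHigherOrder_bchs hF hPf (isFirstOrder_id.sub hPf)
  have hG (b : A) : logS K (expS K (P b) * expS K (b - P b)) = b + f b := by
    simp only [f, BCHs]
    abel
  have hsolve (a : A) : ∃ b, a ∈ F 1 → b ∈ F 1 ∧ b + f b = a := by
    by_cases ha : a ∈ F 1
    · exact (hf.exists_add_eq hF ha).imp fun _ hb _ => hb
    · exact ⟨a, fun h => absurd h ha⟩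
  choose χ hχ using hsolve
  refine ⟨χ, ⟨fun a ha => (hχ a ha).1, fun i hi a ha => ?_, fun a ha => ?_⟩, ?_⟩
  · obtain ⟨hχa, hχeq⟩ := hχ a (hF.mem_of_le hi ha)
    have hχi : χ a ∈ F i := hf.mem_of_add_mem hF hi hχa (by rwa [hχeq])
    have hdiff : χ a - a = -f (χ a) := by rw [← sub_add_cancel_left (χ a) (f (χ a)), hχeq]
    rw [hdiff]
    exact neg_mem (hf.map_mem hi hχi)
  · rw [hG, (hχ a ha).2]
  · rintro χ' ⟨hχ'F, -, hχ'eq⟩ a ha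
    refine hf.eq_of_add_eq hF (hχ'F a ha) (hχ a ha).1 ?_
    rw [← hG, ← hχ'eq a ha, (hχ a ha).2]
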